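/- arXiv:math/0205045 — 8 statements merged into one kernel-verified Lean document; each statement's English description precedes it below -/
import Mathlib

section
/- Let a = u + iv be a complex number with u ≥ 0, and let z₀ = x₀ + i y₀ with y₀ > max(0, −v). For x ≥ x₀ define z(x) = x + i(y₀ − (x₀/y₀)(x − x₀)) (the half-line starting at z₀ that is perpendicular to the segment from 0 to z₀), and set F(x) = Re(z(x) + a·Log z(x)). Then F is strictly increasing on [x₀, ∞). -/
/- With `t = x - x₀` and `w = 1 - i x₀/y₀` one has `z(x) = w (t + i y₀)`, so along the half-line
`d/dx Log z(x) = z'/z = 1/(t + i y₀)` and `F'(x) = 1 + Re(a/(t + i y₀)) = 1 + (u t + v y₀)/(t² + y₀²)`.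
The numerator of `F'`, `t² + u t + y₀(y₀ + v)`, is positive for `t ≥ 0` because `u ≥ 0` and `y₀ + v > 0`. -/

open Real Complex Set

/-- The half-line starting at `z₀ = x₀ + i y₀`, perpendicular to the segment from `0` to `z₀`:
`z(x) = x + i(y₀ − (x₀/y₀)(x − x₀))`. -/
noncomputable def perpPath (x₀ y₀ : ℝ) (x : ℝ) : ℂ :=
  (x : ℂ) + ((y₀ - (x₀ / y₀) * (x - x₀) : ℝ) : ℂ) * Complex.I

/-- The phase function `F(x) = Re(z(x) + a·Log z(x))` along that half-line. -/
noncomputable def phaseFperp (a : ℂ) (x₀ y₀ : ℝ) (x : ℝ) : ℝ :=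
  (perpPath x₀ y₀ x + a * Complex.log (perpPath x₀ y₀ x)).re

lemma perpPath_re (x₀ y₀ x : ℝ) : (perpPath x₀ y₀ x).re = x := by
  simp [perpPath]

lemma perpPath_im (x₀ y₀ x : ℝ) : (perpPath x₀ y₀ x).im = y₀ - (x₀ / y₀) * (x - x₀) := by
  simp [perpPath]

lemma perpPath_eq_mul {x₀ y₀ : ℝ} (hy : y₀ ≠ 0) (x : ℝ) :
    perpPath x₀ y₀ x = (1 - (x₀ / y₀ : ℝ) * I) * ((x - x₀ : ℝ) + y₀ * I) := by
  apply Complex.ext <;> simp [perpPath] <;> field_simp <;> ring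

lemma perpPath_mem_slitPlane {x₀ y₀ x : ℝ} (hy : 0 < y₀) (hx : x₀ ≤ x) :
    perpPath x₀ y₀ x ∈ slitPlane := by
  rw [mem_slitPlane_iff, perpPath_re, perpPath_im]
  by_contra! h
  obtain ⟨hre, him⟩ := h
  have hline : y₀ * y₀ = x₀ * (x - x₀) := by
    field_simp at him
    linarith
  nlinarith [sq_nonneg (x - x₀)]

lemma hasDerivAt_perpPath {x₀ y₀ : ℝ} (hy : y₀ ≠ 0) (x : ℝ) :
    HasDerivAt (perpPath x₀ y₀) (1 - (x₀ / y₀ : ℝ) * I) x := by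
  have hline : HasDerivAt (fun x : ℝ => ((x - x₀ : ℝ) : ℂ) + y₀ * I) 1 x := by
    simpa using ((hasDerivAt_id x).sub_const x₀).ofReal_comp.add_const ((y₀ : ℂ) * I)
  simpa [funext (perpPath_eq_mul (x₀ := x₀) hy)] using hline.const_mul (1 - (x₀ / y₀ : ℝ) * I)

lemma hasDerivAt_log_perpPath {x₀ y₀ x : ℝ} (hy : 0 < y₀) (hx : x₀ ≤ x) :
    HasDerivAt (fun x => log (perpPath x₀ y₀ x)) ((x - x₀ : ℝ) + y₀ * I)⁻¹ x := by
  have hw : (1 - (x₀ / y₀ : ℝ) * I : ℂ) ≠ 0 := fun h => by simpa using congrArg re h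
  refine ((hasDerivAt_log (perpPath_mem_slitPlane hy hx)).comp x
    (hasDerivAt_perpPath hy.ne' x)).congr_deriv ?_
  rw [perpPath_eq_mul hy.ne', mul_inv, mul_comm, ← mul_assoc, mul_inv_cancel₀ hw, one_mul]

lemma hasDerivAt_phaseFperp (a : ℂ) {x₀ y₀ x : ℝ} (hy : 0 < y₀) (hx : x₀ ≤ x) :
    HasDerivAt (phaseFperp a x₀ y₀) (1 + (a / ((x - x₀ : ℝ) + y₀ * I)).re) x := by
  have h := (hasDerivAt_perpPath (x₀ := x₀) hy.ne' x).add
    ((hasDerivAt_log_perpPath hy hx).const_mul a)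
  refine (reCLM.hasFDerivAt.comp_hasDerivAt x h).congr_deriv ?_
  simp [div_eq_mul_inv]

lemma one_add_re_div_pos {a : ℂ} {t y : ℝ} (ht : 0 ≤ t) (hre : 0 ≤ a.re) (hy : 0 < y)
    (him : 0 < y + a.im) : 0 < 1 + (a / (t + y * I)).re := by
  have hD : 0 < t ^ 2 + y ^ 2 := by positivity
  have hquot : (a / (t + y * I)).re = (a.re * t + a.im * y) / (t ^ 2 + y ^ 2) := by
    simp [div_re, normSq_apply]
    ring
  rw [hquot, one_add_div hD.ne']
  exact div_pos (by nlinarith [mul_nonneg hre ht, mul_pos hy him]) hD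

theorem stmt_2 (u v x₀ y₀ : ℝ) (hu : 0 ≤ u) (hy₀ : max 0 (-v) < y₀)
    (a : ℂ) (ha : a = (u : ℂ) + (v : ℂ) * Complex.I) :
    StrictMonoOn (phaseFperp a x₀ y₀) (Set.Ici x₀) := by
  obtain ⟨hy, hv⟩ := max_lt_iff.1 hy₀
  have hderiv (x : ℝ) (hx : x ∈ Ici x₀) := hasDerivAt_phaseFperp a hy hx
  refine strictMonoOn_of_hasDerivWithinAt_pos (convex_Ici x₀)
    (fun x hx => (hderiv x hx).continuousAt.continuousWithinAt)
    (fun x hx => (hderiv x (interior_subset hx)).hasDerivWithinAt) fun x hx => ?_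
  subst ha
  exact one_add_re_div_pos (sub_nonneg.2 (interior_subset hx)) (by simpa using hu) hy
    (by simpa using neg_lt_iff_pos_add.1 hv)
end

section
/- Let n ≥ 1 be an integer, r > 0, and ψ ∈ ℝ with cos ψ ≥ 0. Then ∫₀^∞ n·(r² + 2 r τ cos ψ + τ²)^{−(n+1)/2} dτ ≤ χ(n)/rⁿ, where χ(n) = √π · Γ(n/2 + 1)/Γ(n/2 + 1/2). -/
/-!
Substituting `τ = r t` pulls out the factor `r ^ (1 - 2 s) = r⁻ⁿ`, where `s = (n + 1) / 2`, and
since `cos ψ ≥ 0` the integrand in `t` is at most `(1 + t²)^(-s)`. The integral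
`J s = ∫₀^∞ (1 + t²)^(-s) dt` satisfies `2 s J (s + 1) = (2 s - 1) J s`, by integrating the
derivative of `t (1 + t²)^(-s)`. The Gamma function ratio `√π Γ(s - 1/2) / (2 Γ s)` satisfies
the same recursion, and both take the values `π / 2` at `s = 1` and `1` at `s = 3 / 2`, so the
two agree at the half-integers, i.e. `n J ((n + 1) / 2) = χ n`.
-/

open Real Set MeasureTheory Filter Topology

theorem integrable_one_add_sq_rpow_neg {s : ℝ} (hs : 1 / 2 < s) :
    Integrable fun t : ℝ => (1 + t ^ 2) ^ (-s) := by
  have h := integrable_rpow_neg_one_add_norm_sq (E := ℝ) (μ := volume) (r := 2 * s)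
    (by simp; linarith)
  simpa [Real.norm_eq_abs, sq_abs, neg_div] using h

theorem hasDerivAt_mul_one_add_sq_rpow_neg (s t : ℝ) :
    HasDerivAt (fun t : ℝ => t * (1 + t ^ 2) ^ (-s))
      ((1 - 2 * s) * (1 + t ^ 2) ^ (-s) + 2 * s * (1 + t ^ 2) ^ (-(s + 1))) t := by
  have hpos : 0 < 1 + t ^ 2 := by positivity
  have hbase : HasDerivAt (fun t : ℝ => 1 + t ^ 2) (2 * t) t := by
    simpa using (hasDerivAt_pow 2 t).const_add 1
  refine ((hasDerivAt_id t).mul (hbase.rpow_const (p := -s) (Or.inl hpos.ne'))).congr_deriv ?_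
  rw [show -(s + 1) = -s - 1 by ring, rpow_sub_one hpos.ne', id]
  field_simp
  ring

theorem tendsto_mul_one_add_sq_rpow_neg_atTop {s : ℝ} (hs : 1 / 2 < s) :
    Tendsto (fun t : ℝ => t * (1 + t ^ 2) ^ (-s)) atTop (𝓝 0) := by
  refine tendsto_of_tendsto_of_tendsto_of_le_of_le' tendsto_const_nhds
    (tendsto_rpow_neg_atTop (y := 2 * s - 1) (by linarith)) ?_ ?_
  · filter_upwards [eventually_ge_atTop 0] with t ht
    positivity
  · filter_upwards [eventually_gt_atTop 0] with t ht
    calc t * (1 + t ^ 2) ^ (-s) ≤ t * (t ^ 2) ^ (-s) :=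
          mul_le_mul_of_nonneg_left
            (rpow_le_rpow_of_nonpos (by positivity) (by linarith) (by linarith)) ht.le
      _ = t ^ (-(2 * s - 1)) := by
          rw [← rpow_natCast, ← rpow_mul ht.le, ← rpow_one_add' ht.le (by push_cast; linarith)]
          ring_nf

theorem tendsto_mul_one_add_sq_rpow_neg_half_atTop :
    Tendsto (fun t : ℝ => t * (1 + t ^ 2) ^ (-(1 / 2 : ℝ))) atTop (𝓝 1) := by
  have h : Tendsto (fun t : ℝ => ((t ^ 2)⁻¹ + 1) ^ (-(1 / 2 : ℝ))) atTop (𝓝 1) := by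
    have := ((tendsto_inv_atTop_zero.comp (tendsto_pow_atTop two_ne_zero)).add_const
      (1 : ℝ)).rpow_const (p := -(1 / 2 : ℝ)) (Or.inl (by norm_num))
    simpa using this
  refine h.congr' ?_
  filter_upwards [eventually_gt_atTop 0] with t ht
  rw [show 1 + t ^ 2 = t ^ 2 * ((t ^ 2)⁻¹ + 1) by field_simp,
    mul_rpow (by positivity) (by positivity), ← rpow_natCast, ← rpow_mul ht.le]
  norm_num [rpow_neg_one]
  field_simp

/-- The integral `J s` of the header; it diverges for `s ≤ 1/2`, where its value is the junk `0`. -/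
noncomputable def oneAddSqIntegral (s : ℝ) : ℝ :=
  ∫ t in Ioi 0, (1 + t ^ 2) ^ (-s)

theorem oneAddSqIntegral_add_one {s : ℝ} (hs : 1 / 2 < s) :
    2 * s * oneAddSqIntegral (s + 1) = (2 * s - 1) * oneAddSqIntegral s := by
  have hint : ∀ {u : ℝ}, 1 / 2 < u → IntegrableOn (fun t : ℝ => (1 + t ^ 2) ^ (-u)) (Ioi 0) :=
    fun hu => (integrable_one_add_sq_rpow_neg hu).integrableOn
  have hparts := integral_Ioi_of_hasDerivAt_of_tendsto'
    (fun t _ => hasDerivAt_mul_one_add_sq_rpow_neg s t)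
    (((hint hs).const_mul _).add ((hint (by linarith)).const_mul _))
    (tendsto_mul_one_add_sq_rpow_neg_atTop hs)
  rw [integral_add ((hint hs).const_mul _) ((hint (by linarith)).const_mul _),
    integral_const_mul, integral_const_mul] at hparts
  simp only [oneAddSqIntegral]
  linarith

theorem oneAddSqIntegral_one : oneAddSqIntegral 1 = π / 2 := by
  simp [oneAddSqIntegral, rpow_neg_one, integral_Ioi_inv_one_add_sq]

theorem oneAddSqIntegral_three_halves : oneAddSqIntegral (3 / 2) = 1 := by
  have hderiv (t : ℝ) : HasDerivAt (fun t : ℝ => t * (1 + t ^ 2) ^ (-(1 / 2 : ℝ)))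
      ((1 + t ^ 2) ^ (-(3 / 2 : ℝ))) t :=
    (hasDerivAt_mul_one_add_sq_rpow_neg (1 / 2) t).congr_deriv (by norm_num)
  have hparts := integral_Ioi_of_hasDerivAt_of_tendsto' (a := 0) (fun t _ => hderiv t)
    (integrable_one_add_sq_rpow_neg (by norm_num)).integrableOn
    tendsto_mul_one_add_sq_rpow_neg_half_atTop
  simpa [oneAddSqIntegral] using hparts

theorem oneAddSqIntegral_half_nat_add_one (m : ℕ) :
    oneAddSqIntegral (m / 2 + 1) = √π * Gamma (m / 2 + 1 / 2) / (2 * Gamma (m / 2 + 1)) := by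
  induction m using Nat.twoStepInduction with
  | zero =>
    simp only [Nat.cast_zero, zero_div, zero_add, oneAddSqIntegral_one, Gamma_one,
      Gamma_one_half_eq, mul_self_sqrt pi_pos.le]
    ring
  | one =>
    have hsqrt : 0 < √π := sqrt_pos.mpr pi_pos
    rw [show ((1 : ℕ) : ℝ) / 2 + 1 = 3 / 2 by norm_num, oneAddSqIntegral_three_halves,
      show ((1 : ℕ) : ℝ) / 2 + 1 / 2 = 1 by norm_num, show (3 / 2 : ℝ) = 1 / 2 + 1 by norm_num,
      Gamma_add_one (by norm_num), Gamma_one_half_eq, Gamma_one]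
    field_simp
  | more m ih _ =>
    have hm : (0 : ℝ) ≤ m / 2 := by positivity
    have hrec := oneAddSqIntegral_add_one (s := m / 2 + 1) (by linarith)
    have hΓpos := Gamma_pos_of_pos (s := (m : ℝ) / 2 + 1) (by positivity)
    rw [show ((m + 2 : ℕ) : ℝ) / 2 + 1 = m / 2 + 1 + 1 by push_cast; ring,
      show ((m + 2 : ℕ) : ℝ) / 2 + 1 / 2 = m / 2 + 1 / 2 + 1 by push_cast; ring,
      Gamma_add_one (by positivity), Gamma_add_one (by positivity)]
    rw [ih] at hrec
    field_simp at hrec ⊢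
    linarith

theorem natCast_mul_oneAddSqIntegral {n : ℕ} (hn : 1 ≤ n) :
    n * oneAddSqIntegral ((n + 1) / 2) =
      √π * Gamma (n / 2 + 1) / Gamma (n / 2 + 1 / 2) := by
  obtain ⟨m, rfl⟩ := Nat.exists_eq_add_of_le' hn
  have hΓpos := Gamma_pos_of_pos (s := (m : ℝ) / 2 + 1) (by positivity)
  rw [show (((m + 1 : ℕ) : ℝ) + 1) / 2 = m / 2 + 1 by push_cast; ring,
    oneAddSqIntegral_half_nat_add_one,
    show ((m + 1 : ℕ) : ℝ) / 2 + 1 = (m / 2 + 1 / 2) + 1 by push_cast; ring,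
    show ((m + 1 : ℕ) : ℝ) / 2 + 1 / 2 = m / 2 + 1 by push_cast; ring,
    Gamma_add_one (s := m / 2 + 1 / 2) (by positivity)]
  push_cast
  field_simp

theorem integral_Ioi_sq_add_mul_cos_add_sq_rpow {r : ℝ} (hr : 0 < r) (ψ s : ℝ) :
    ∫ τ in Ioi 0, (r ^ 2 + 2 * r * τ * cos ψ + τ ^ 2) ^ (-s) =
      r ^ (1 - 2 * s) * ∫ t in Ioi 0, (1 + 2 * t * cos ψ + t ^ 2) ^ (-s) := by
  have hscale := integral_comp_mul_left_Ioi
    (fun τ => (r ^ 2 + 2 * r * τ * cos ψ + τ ^ 2) ^ (-s)) 0 hr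
  rw [mul_zero, smul_eq_mul] at hscale
  have hhom (t : ℝ) : (r ^ 2 + 2 * r * (r * t) * cos ψ + (r * t) ^ 2) ^ (-s) =
      r ^ (-2 * s) * (1 + 2 * t * cos ψ + t ^ 2) ^ (-s) := by
    have hq : 0 ≤ 1 + 2 * t * cos ψ + t ^ 2 := by
      nlinarith [sq_nonneg (t + cos ψ), cos_sq_le_one ψ]
    rw [show r ^ 2 + 2 * r * (r * t) * cos ψ + (r * t) ^ 2 = r ^ 2 * (1 + 2 * t * cos ψ + t ^ 2)
      by ring, mul_rpow (by positivity) hq, ← rpow_natCast, ← rpow_mul hr.le]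
    norm_num
  simp only [hhom, integral_const_mul] at hscale
  rw [eq_comm, inv_mul_eq_iff_eq_mul₀ hr.ne'] at hscale
  rw [hscale, sub_eq_add_neg, rpow_add hr, rpow_one, mul_assoc, neg_mul]

theorem integral_Ioi_one_add_mul_cos_add_sq_rpow_le {ψ s : ℝ} (hψ : 0 ≤ cos ψ) (hs : 1 / 2 < s) :
    ∫ t in Ioi 0, (1 + 2 * t * cos ψ + t ^ 2) ^ (-s) ≤ oneAddSqIntegral s := by
  refine integral_mono_of_nonneg ?_ (integrable_one_add_sq_rpow_neg hs).integrableOn ?_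
  · filter_upwards [ae_restrict_mem measurableSet_Ioi] with t ht
    exact rpow_nonneg (by have : (0 : ℝ) < t := ht; positivity) _
  · filter_upwards [ae_restrict_mem measurableSet_Ioi] with t ht
    have ht : (0 : ℝ) < t := ht
    exact rpow_le_rpow_of_nonpos (by positivity) (by nlinarith [mul_nonneg ht.le hψ]) (by linarith)

theorem stmt_4 (n : ℕ) (hn : 1 ≤ n) (r : ℝ) (hr : 0 < r) (ψ : ℝ) (hψ : 0 ≤ Real.cos ψ) :
    ∫ τ in Set.Ioi (0 : ℝ),
        (n : ℝ) * (r ^ 2 + 2 * r * τ * Real.cos ψ + τ ^ 2) ^ (-(((n : ℝ) + 1) / 2)) ≤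
      (Real.sqrt Real.pi * Real.Gamma ((n : ℝ) / 2 + 1) /
        Real.Gamma ((n : ℝ) / 2 + 1 / 2)) / r ^ n := by
  have hs : 1 / 2 < ((n : ℝ) + 1) / 2 := by
    have : (1 : ℝ) ≤ n := by exact_mod_cast hn
    linarith
  have hpow : r ^ (1 - 2 * (((n : ℝ) + 1) / 2)) = (r ^ n)⁻¹ := by
    rw [show 1 - 2 * (((n : ℝ) + 1) / 2) = -n by ring, rpow_neg hr.le, rpow_natCast]
  rw [integral_const_mul, integral_Ioi_sq_add_mul_cos_add_sq_rpow hr, hpow,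
    ← natCast_mul_oneAddSqIntegral hn]
  calc _ ≤ (n : ℝ) * ((r ^ n)⁻¹ * oneAddSqIntegral ((n + 1) / 2)) := by
        gcongr
        exact integral_Ioi_one_add_mul_cos_add_sq_rpow_le hψ hs
    _ = _ := by ring
end

section
/- Let n ≥ 1 be an integer and ψ ∈ ℝ with cos ψ ≥ 0. Then ∫₀^∞ n·(u² + 2u cos ψ + 1)^{−(n+1)/2} du = Σ_{k=0}^{∞} [ (n/2)ₖ · (1/2)ₖ / ( (n/2 + 1)ₖ · k! ) ] · (sin ψ)^{2k}, i.e., the integral equals the Gauss hypergeometric series ₂F₁(n/2, 1/2; n/2 + 1; sin²ψ); the series on the right converges (also when sin²ψ = 1). -/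
/-!
Put `x = sin² ψ` and `c = cos ψ`. The substitution `u = √(1 - x v²) / v - c` maps `(0, 1)`
bijectively onto `(0, ∞)` and turns `u² + 2uc + 1` into `v⁻²`, so the integral becomes
`∫₀¹ n v^(n-1) (1 - x v²)^(-1/2) dv`. Expanding `(1 - x v²)^(-1/2)` in its binomial series and
integrating term by term gives `∑ n / (n + 2k) · (1/2)ₖ / k! · xᵏ`, and
`n / (n + 2k) = (n/2)ₖ / (n/2 + 1)ₖ`. All terms are nonnegative and their sum is integrable, since
the original integral converges; this justifies the termwise integration and yields the
convergence of the series, also at `x = 1`.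
-/

open Real Set MeasureTheory

lemma Ring.choose_add_natCast_sub_one {R : Type*} [Field R] [CharZero R] (r : R) (k : ℕ) :
    Ring.choose (r + k - 1) k = (ascPochhammer R k).eval r / k.factorial := by
  rw [Ring.choose_eq_smul, Polynomial.descPochhammer_smeval_eq_ascPochhammer,
    Polynomial.ascPochhammer_smeval_eq_eval, smul_eq_mul, inv_mul_eq_div]
  ring_nf

lemma hasSum_ascPochhammer_div_factorial_mul_pow (a : ℝ) {y : ℝ} (hy : |y| < 1) :
    HasSum (fun k ↦ (ascPochhammer ℝ k).eval a / k.factorial * y ^ k) (1 / (1 - y) ^ a) := by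
  have h := (Real.one_div_one_sub_rpow_hasFPowerSeriesOnBall_zero a).hasSum
    (y := y) (by simpa [enorm_eq_nnnorm, ← NNReal.coe_lt_one] using hy)
  simpa [FormalMultilinearSeries.ofScalars_apply_eq, Ring.choose_add_natCast_sub_one, mul_comm]
    using h

lemma mul_ascPochhammer_eval_add_one {S : Type*} [CommSemiring S] (t : S) (k : ℕ) :
    t * (ascPochhammer S k).eval (t + 1) = (ascPochhammer S k).eval t * (t + k) := by
  rw [← ascPochhammer_succ_eval, ascPochhammer_succ_left]
  simp [Polynomial.eval_comp]

lemma ordinaryHypergeometricCoefficient_half_half_add_one {a : ℝ} (ha : 0 < a) (k : ℕ) :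
    ordinaryHypergeometricCoefficient (a / 2) (1 / 2) (a / 2 + 1) k =
      a / (a + 2 * k) * ((ascPochhammer ℝ k).eval (1 / 2) / k.factorial) := by
  have h := mul_ascPochhammer_eval_add_one (a / 2) k
  have hC := (ascPochhammer_pos k (a / 2 + 1) (by positivity)).ne'
  have hden : a + 2 * k ≠ 0 := by positivity
  rw [ordinaryHypergeometricCoefficient]
  generalize (ascPochhammer ℝ k).eval (a / 2 + 1) = C at h hC
  field_simp
  linear_combination -2 * (ascPochhammer ℝ k).eval (1 / 2) * h

lemma setIntegral_Ioo_zero_one_rpow {r : ℝ} (hr : -1 < r) :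
    ∫ v in Ioo 0 1, v ^ r = 1 / (r + 1) := by
  rw [← integral_Ioc_eq_integral_Ioo, ← intervalIntegral.integral_of_le zero_le_one,
    integral_rpow (.inl hr), one_rpow, zero_rpow (by linarith), sub_zero]

lemma hasSum_integral_of_nonneg {α : Type*} [MeasurableSpace α] {μ : Measure α}
    {f : ℕ → α → ℝ} {F : α → ℝ} (hf_meas : ∀ k, AEStronglyMeasurable (f k) μ)
    (hf_nonneg : ∀ᵐ v ∂μ, ∀ k, 0 ≤ f k v) (hF : Integrable F μ)
    (hf_sum : ∀ᵐ v ∂μ, HasSum (f · v) (F v)) :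
    HasSum (fun k ↦ ∫ v, f k v ∂μ) (∫ v, F v ∂μ) := by
  refine hasSum_integral_of_dominated_convergence f hf_meas (fun k ↦ ?_)
    (hf_sum.mono fun v h ↦ h.summable) (hF.congr ?_) hf_sum
  · filter_upwards [hf_nonneg] with v hv using (norm_of_nonneg (hv k)).le
  · filter_upwards [hf_sum] with v hv using hv.tsum_eq.symm

-- The inverse of `u ↦ (u ^ 2 + 2 * u * c + 1) ^ (-1 / 2)` on `(0, ∞)` when `c ^ 2 + x = 1`.
noncomputable def invQuadSubst (c x v : ℝ) : ℝ := √(1 - x * v ^ 2) / v - c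

section Substitution

variable {c x : ℝ}

lemma one_sub_mul_sq_pos (hx : x ≤ 1) {v : ℝ} (hv : v ∈ Ioo 0 1) : 0 < 1 - x * v ^ 2 := by
  obtain ⟨hv0, hv1⟩ := hv
  nlinarith [mul_pos hv0 hv0]

lemma invQuadSubst_sq_add (hcx : c ^ 2 + x = 1) {v : ℝ} (hv : 0 < v) (h : 0 ≤ 1 - x * v ^ 2) :
    invQuadSubst c x v ^ 2 + 2 * invQuadSubst c x v * c + 1 = (v ^ 2)⁻¹ := by
  have hsq := sq_sqrt h
  unfold invQuadSubst
  field_simp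
  linear_combination hsq - v ^ 2 * hcx

lemma hasDerivAt_invQuadSubst {v : ℝ} (hv : 0 < v) (h : 0 < 1 - x * v ^ 2) :
    HasDerivAt (invQuadSubst c x) (-(v ^ 2 * √(1 - x * v ^ 2))⁻¹) v := by
  have hsqrt : HasDerivAt (fun w ↦ √(1 - x * w ^ 2))
      (-(x * (2 * v)) / (2 * √(1 - x * v ^ 2))) v := by
    simpa using (((hasDerivAt_pow 2 v).const_mul x).const_sub 1).sqrt h.ne'
  refine ((hsqrt.div (hasDerivAt_id' v) hv.ne').sub_const c).congr_deriv ?_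
  have hs := sq_sqrt h.le
  have hs0 := (sqrt_pos.2 h).ne'
  field_simp
  linear_combination -hs

lemma injOn_invQuadSubst (hcx : c ^ 2 + x = 1) : InjOn (invQuadSubst c x) (Ioo 0 1) := by
  have hx : x ≤ 1 := by nlinarith
  intro v hv w hw hvw
  have h := invQuadSubst_sq_add hcx hv.1 (one_sub_mul_sq_pos hx hv).le
  rw [hvw, invQuadSubst_sq_add hcx hw.1 (one_sub_mul_sq_pos hx hw).le, inv_inj] at h
  exact (sq_eq_sq₀ hw.1.le hv.1.le).1 h |>.symm

lemma image_invQuadSubst (hc : 0 ≤ c) (hcx : c ^ 2 + x = 1) :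
    invQuadSubst c x '' Ioo 0 1 = Ioi 0 := by
  have hx : x ≤ 1 := by nlinarith
  refine Subset.antisymm ?_ fun u (hu : 0 < u) ↦ ?_
  · rintro _ ⟨v, hv, rfl⟩
    have h := invQuadSubst_sq_add hcx hv.1 (one_sub_mul_sq_pos hx hv).le
    have hv_inv : 1 < (v ^ 2)⁻¹ := one_lt_inv₀ (pow_pos hv.1 2) |>.2 (by nlinarith [hv.1, hv.2])
    have hnn : 0 ≤ invQuadSubst c x v + c := by
      simp only [invQuadSubst, sub_add_cancel]; exact div_nonneg (sqrt_nonneg _) hv.1.le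
    show 0 < invQuadSubst c x v
    nlinarith
  · set b := u ^ 2 + 2 * u * c + 1
    have hb : 1 < b := by nlinarith
    have hsqrt_b : 1 < √b := by simpa using sqrt_lt_sqrt zero_le_one hb
    refine ⟨(√b)⁻¹, ⟨by positivity, inv_lt_one_of_one_lt₀ hsqrt_b⟩, ?_⟩
    have hsq : 1 - x * ((√b)⁻¹) ^ 2 = ((u + c) * (√b)⁻¹) ^ 2 := by
      have := sq_sqrt (zero_le_one.trans hb.le)
      field_simp
      rw [this]
      linear_combination -hcx
    rw [invQuadSubst, hsq, sqrt_sq (by positivity)]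
    field_simp
    ring

lemma integral_Ioi_eq_integral_invQuadSubst (hc : 0 ≤ c) (hcx : c ^ 2 + x = 1) (g : ℝ → ℝ) :
    ∫ u in Ioi 0, g u =
      ∫ v in Ioo 0 1, (v ^ 2 * √(1 - x * v ^ 2))⁻¹ * g (invQuadSubst c x v) := by
  have hx : x ≤ 1 := by nlinarith
  rw [← image_invQuadSubst hc hcx, integral_image_eq_integral_abs_deriv_smul measurableSet_Ioo
    (fun v hv ↦ (hasDerivAt_invQuadSubst hv.1 (one_sub_mul_sq_pos hx hv)).hasDerivWithinAt)
    (injOn_invQuadSubst hcx)]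
  refine setIntegral_congr_fun measurableSet_Ioo fun v _ ↦ ?_
  rw [abs_neg, abs_of_nonneg (by positivity), smul_eq_mul]

lemma integrableOn_Ioi_iff_invQuadSubst (hc : 0 ≤ c) (hcx : c ^ 2 + x = 1) (g : ℝ → ℝ) :
    IntegrableOn g (Ioi 0) ↔
      IntegrableOn (fun v ↦ (v ^ 2 * √(1 - x * v ^ 2))⁻¹ * g (invQuadSubst c x v)) (Ioo 0 1) := by
  have hx : x ≤ 1 := by nlinarith
  rw [← image_invQuadSubst hc hcx, integrableOn_image_iff_integrableOn_abs_deriv_smul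
    measurableSet_Ioo
    (fun v hv ↦ (hasDerivAt_invQuadSubst hv.1 (one_sub_mul_sq_pos hx hv)).hasDerivWithinAt)
    (injOn_invQuadSubst hcx)]
  refine integrableOn_congr_fun (fun v _ ↦ ?_) measurableSet_Ioo
  rw [abs_neg, abs_of_nonneg (by positivity), smul_eq_mul]

lemma invQuadSubst_rpow_integrand (hcx : c ^ 2 + x = 1) (a : ℝ) {v : ℝ} (hv : v ∈ Ioo 0 1) :
    (v ^ 2 * √(1 - x * v ^ 2))⁻¹ *
        (a * (invQuadSubst c x v ^ 2 + 2 * invQuadSubst c x v * c + 1) ^ (-((a + 1) / 2))) =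
      a * v ^ (a - 1) / √(1 - x * v ^ 2) := by
  have hx : x ≤ 1 := by nlinarith
  have h := one_sub_mul_sq_pos hx hv
  have hpow : (v ^ 2) ^ ((a + 1) / 2) = v ^ (a - 1) * v ^ 2 := by
    rw [← rpow_two, ← rpow_mul hv.1.le, ← rpow_add hv.1]
    ring_nf
  rw [invQuadSubst_sq_add hcx hv.1 h.le, inv_rpow (sq_nonneg v), rpow_neg (sq_nonneg v), inv_inv,
    hpow]
  have hs0 := (sqrt_pos.2 h).ne'
  have hv0 := hv.1.ne'
  field_simp

lemma integral_Ioi_mul_rpow_quadratic (hc : 0 ≤ c) (hcx : c ^ 2 + x = 1) (a : ℝ) :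
    ∫ u in Ioi 0, a * (u ^ 2 + 2 * u * c + 1) ^ (-((a + 1) / 2)) =
      ∫ v in Ioo 0 1, a * v ^ (a - 1) / √(1 - x * v ^ 2) := by
  rw [integral_Ioi_eq_integral_invQuadSubst hc hcx]
  exact setIntegral_congr_fun measurableSet_Ioo fun v hv ↦ invQuadSubst_rpow_integrand hcx a hv

lemma integrableOn_Ioi_mul_rpow_quadratic (hc : 0 ≤ c) {a : ℝ} (ha : 0 < a) :
    IntegrableOn (fun u ↦ a * (u ^ 2 + 2 * u * c + 1) ^ (-((a + 1) / 2))) (Ioi 0) := by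
  have hbound : Integrable (fun u : ℝ ↦ (1 + ‖u‖ ^ 2) ^ (-(a + 1) / 2)) :=
    integrable_rpow_neg_one_add_norm_sq (by simpa using ha)
  refine (hbound.integrableOn.const_mul a).mono'
    (by fun_prop : Measurable _).aestronglyMeasurable ?_
  filter_upwards [ae_restrict_mem measurableSet_Ioi] with u (hu : 0 < u)
  rw [norm_of_nonneg (by positivity), norm_eq_abs, sq_abs, neg_div]
  exact mul_le_mul_of_nonneg_left
    (rpow_le_rpow_of_nonpos (by positivity) (by nlinarith) (by linarith)) ha.le

lemma integrableOn_Ioo_mul_rpow_div_sqrt (hc : 0 ≤ c) (hcx : c ^ 2 + x = 1) {a : ℝ}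
    (ha : 0 < a) :
    IntegrableOn (fun v ↦ a * v ^ (a - 1) / √(1 - x * v ^ 2)) (Ioo 0 1) := by
  refine ((integrableOn_Ioi_iff_invQuadSubst hc hcx _).1
    (integrableOn_Ioi_mul_rpow_quadratic hc ha)).congr_fun (fun v hv ↦ ?_) measurableSet_Ioo
  exact invQuadSubst_rpow_integrand hcx a hv

end Substitution

theorem hasSum_ordinaryHypergeometricCoefficient_mul_pow {a c x : ℝ} (ha : 0 < a) (hc : 0 ≤ c)
    (hx : 0 ≤ x) (hcx : c ^ 2 + x = 1) :
    HasSum (fun k ↦ ordinaryHypergeometricCoefficient (a / 2) (1 / 2) (a / 2 + 1) k * x ^ k)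
      (∫ u in Ioi 0, a * (u ^ 2 + 2 * u * c + 1) ^ (-((a + 1) / 2))) := by
  set b : ℕ → ℝ := fun k ↦ (ascPochhammer ℝ k).eval (1 / 2) / k.factorial
  set f : ℕ → ℝ → ℝ := fun k v ↦ a * b k * x ^ k * v ^ (a - 1 + 2 * k)
  have hf_nonneg : ∀ v ∈ Ioo (0 : ℝ) 1, ∀ k, 0 ≤ f k v := fun v hv k ↦ by
    have hb := ascPochhammer_pos k (1 / 2 : ℝ) (by norm_num)
    have hv0 := hv.1
    positivity
  have hf_sum : ∀ v ∈ Ioo (0 : ℝ) 1, HasSum (f · v) (a * v ^ (a - 1) / √(1 - x * v ^ 2)) := by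
    intro v hv
    have hy : |x * v ^ 2| < 1 := by
      rw [abs_of_nonneg (by positivity)]
      nlinarith [hv.1, hv.2, mul_pos hv.1 hv.1]
    have h := (hasSum_ascPochhammer_div_factorial_mul_pow (1 / 2) hy).mul_left (a * v ^ (a - 1))
    rw [← sqrt_eq_rpow, mul_one_div] at h
    refine h.congr_fun fun k ↦ ?_
    simp only [f, b]
    rw [rpow_add hv.1, show (2 : ℝ) * k = ((2 * k : ℕ) : ℝ) by push_cast; ring, rpow_natCast,
      pow_mul, mul_pow]
    ring
  have hf_int : ∀ k, ∫ v in Ioo 0 1, f k v =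
      ordinaryHypergeometricCoefficient (a / 2) (1 / 2) (a / 2 + 1) k * x ^ k := fun k ↦ by
    simp only [f, b]
    rw [integral_const_mul, setIntegral_Ioo_zero_one_rpow (by linarith [k.cast_nonneg (α := ℝ)]),
      ordinaryHypergeometricCoefficient_half_half_add_one ha]
    ring_nf
  rw [integral_Ioi_mul_rpow_quadratic hc hcx, ← funext hf_int]
  exact hasSum_integral_of_nonneg (fun k ↦ (by fun_prop : Measurable (f k)).aestronglyMeasurable)
    ((ae_restrict_iff' measurableSet_Ioo).2 (.of_forall hf_nonneg))
    (integrableOn_Ioo_mul_rpow_div_sqrt hc hcx ha)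
    ((ae_restrict_iff' measurableSet_Ioo).2 (.of_forall hf_sum))

theorem stmt_5 (n : ℕ) (hn : 1 ≤ n) (ψ : ℝ) (hψ : 0 ≤ Real.cos ψ) :
    Summable (fun k : ℕ =>
      (ascPochhammer ℝ k).eval ((n : ℝ) / 2) * (ascPochhammer ℝ k).eval (1 / 2) /
        ((ascPochhammer ℝ k).eval ((n : ℝ) / 2 + 1) * (Nat.factorial k : ℝ)) *
        Real.sin ψ ^ (2 * k)) ∧
    ∫ u in Set.Ioi (0 : ℝ),
        (n : ℝ) * (u ^ 2 + 2 * u * Real.cos ψ + 1) ^ (-(((n : ℝ) + 1) / 2)) =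
      ∑' k : ℕ,
        (ascPochhammer ℝ k).eval ((n : ℝ) / 2) * (ascPochhammer ℝ k).eval (1 / 2) /
          ((ascPochhammer ℝ k).eval ((n : ℝ) / 2 + 1) * (Nat.factorial k : ℝ)) *
          Real.sin ψ ^ (2 * k) := by
  have h := hasSum_ordinaryHypergeometricCoefficient_mul_pow (a := n) (Nat.cast_pos.2 hn) hψ
    (sq_nonneg _) (cos_sq_add_sin_sq ψ)
  have hterm : ∀ k : ℕ,
      ordinaryHypergeometricCoefficient ((n : ℝ) / 2) (1 / 2) ((n : ℝ) / 2 + 1) k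
          * (sin ψ ^ 2) ^ k =
        (ascPochhammer ℝ k).eval ((n : ℝ) / 2) * (ascPochhammer ℝ k).eval (1 / 2) /
          ((ascPochhammer ℝ k).eval ((n : ℝ) / 2 + 1) * (Nat.factorial k : ℝ)) *
          Real.sin ψ ^ (2 * k) := fun k ↦ by
    rw [← pow_mul]
    ring
  simp only [hterm] at h
  exact ⟨h.summable, h.tsum_eq.symm⟩
end

section
/- Define polynomials φ_s for s = 0,1,2,… by φ₀(τ) = 1 and φ_{s+1}(τ) = −4τ²(τ+1)²·φ_s′(τ) − (1/4)∫₀^τ (20u² + 20u + 3)·φ_s(u) du. Then for every s ≥ 1: (i) φ_s is a polynomial of degree exactly 3s; (ii) τ^s divides φ_s(τ); and (iii) every coefficient of the polynomial (−1)^s·φ_s has nonnegative value, i.e., all coefficients of φ_s have the sign of (−1)^s. -/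
open Polynomial

/-- The antiderivative of a polynomial vanishing at `0`. -/
noncomputable def polyAntideriv (p : Polynomial ℝ) : Polynomial ℝ :=
  p.sum fun n a => Polynomial.C (a / (n + 1)) * Polynomial.X ^ (n + 1)

/-- The coefficient polynomials `φ_s` of the uniform asymptotic expansion:
`φ₀ = 1`, `φ_{s+1}(τ) = −4τ²(τ+1)²·φ_s′(τ) − (1/4)∫₀^τ (20u² + 20u + 3)·φ_s(u) du`. -/
noncomputable def phiP : ℕ → Polynomial ℝ
  | 0 => 1
  | s + 1 =>
      -4 * Polynomial.X ^ 2 * (Polynomial.X + 1) ^ 2 * (phiP s).derivative -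
        Polynomial.C (1 / 4) *
          polyAntideriv ((20 * Polynomial.X ^ 2 + 20 * Polynomial.X + 3) * phiP s)

lemma antideriv_coeff_zero (p : ℝ[X]) : (polyAntideriv p).coeff 0 = 0 := by
  simp [polyAntideriv, Polynomial.coeff_sum, Polynomial.sum_def, coeff_C_mul, coeff_X_pow]

lemma antideriv_coeff_succ (p : ℝ[X]) (m : ℕ) :
    (polyAntideriv p).coeff (m+1) = p.coeff m / (m+1) := by
  rw [polyAntideriv, Polynomial.coeff_sum, Polynomial.sum_def]
  simp only [coeff_C_mul, coeff_X_pow, mul_ite, mul_one, mul_zero, add_left_inj]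
  rw [Finset.sum_ite_eq p.support m (fun n => p.coeff n / (n+1))]
  by_cases hm : m ∈ p.support
  · simp [hm]
  · simp [hm, Polynomial.notMem_support_iff.mp hm]

lemma antideriv_C_mul (c : ℝ) (p : ℝ[X]) :
    polyAntideriv (C c * p) = C c * polyAntideriv p := by
  ext n
  cases n with
  | zero => simp [antideriv_coeff_zero]
  | succ m => simp [antideriv_coeff_succ, coeff_C_mul]; ring

lemma antideriv_natDegree_le (p : ℝ[X]) :
    (polyAntideriv p).natDegree ≤ p.natDegree + 1 := by
  rw [Polynomial.natDegree_le_iff_coeff_eq_zero]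
  intro m hm
  match m, hm with
  | m + 1, hm =>
    rw [antideriv_coeff_succ, Polynomial.coeff_eq_zero_of_natDegree_lt (by omega), zero_div]

lemma antideriv_dvd {p : ℝ[X]} {k : ℕ} (h : X^k ∣ p) :
    X^(k+1) ∣ polyAntideriv p := by
  rw [X_pow_dvd_iff] at h ⊢
  intro m hm
  cases m with
  | zero => exact antideriv_coeff_zero p
  | succ m => rw [antideriv_coeff_succ, h m (by omega), zero_div]

def NonnegP (p : ℝ[X]) : Prop := ∀ k, 0 ≤ p.coeff k

lemma NonnegP.add {p q : ℝ[X]} (hp : NonnegP p) (hq : NonnegP q) : NonnegP (p + q) := by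
  intro k; rw [coeff_add]; exact add_nonneg (hp k) (hq k)

lemma NonnegP.mul {p q : ℝ[X]} (hp : NonnegP p) (hq : NonnegP q) : NonnegP (p * q) := by
  intro k; rw [coeff_mul]
  exact Finset.sum_nonneg fun x _ => mul_nonneg (hp x.1) (hq x.2)

lemma NonnegP.deriv {p : ℝ[X]} (hp : NonnegP p) : NonnegP p.derivative := by
  intro k
  rw [Polynomial.coeff_derivative]
  exact mul_nonneg (hp _) (by positivity)

lemma NonnegP.antideriv {p : ℝ[X]} (hp : NonnegP p) : NonnegP (polyAntideriv p) := by
  intro k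
  cases k with
  | zero => simp [antideriv_coeff_zero]
  | succ m => rw [antideriv_coeff_succ]; exact div_nonneg (hp _) (by positivity)

lemma nonnegP_X : NonnegP (X : ℝ[X]) := by
  intro k; rw [coeff_X]; split <;> norm_num

lemma nonnegP_C {c : ℝ} (hc : 0 ≤ c) : NonnegP (C c : ℝ[X]) := by
  intro k; rw [coeff_C]; split <;> simp [hc]

lemma nonnegP_B : NonnegP (4*X^2*(X+1)^2 : ℝ[X]) := by
  have : (4*X^2*(X+1)^2 : ℝ[X]) = C 4 * X * X * ((X + C 1) * (X + C 1)) := by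
    rw [map_ofNat C 4, map_one]; ring
  rw [this]
  exact ((((nonnegP_C (by norm_num)).mul nonnegP_X).mul nonnegP_X).mul
    (((nonnegP_X.add (nonnegP_C zero_le_one))).mul ((nonnegP_X.add (nonnegP_C zero_le_one)))))

lemma nonnegP_q : NonnegP (20*X^2+20*X+3 : ℝ[X]) := by
  have : (20*X^2+20*X+3 : ℝ[X]) = C 20 * (X*X) + C 20 * X + C 3 := by
    rw [map_ofNat C 20, map_ofNat C 3]; ring
  rw [this]
  exact (((nonnegP_C (by norm_num)).mul (nonnegP_X.mul nonnegP_X)).add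
    ((nonnegP_C (by norm_num)).mul nonnegP_X)).add (nonnegP_C (by norm_num))

noncomputable def Psi (s : ℕ) : ℝ[X] := (-1)^s * phiP s

lemma neg_one_pow_C (s : ℕ) : ((-1 : ℝ[X]))^s = C ((-1:ℝ)^s) := by
  rw [map_pow, map_neg, map_one]

lemma psi_rec (s : ℕ) : Psi (s+1) =
    4 * X^2 * (X+1)^2 * (Psi s).derivative +
      C (1/4) * polyAntideriv ((20*X^2+20*X+3) * Psi s) := by
  unfold Psi
  rw [phiP]
  have h1 : ((20*X^2+20*X+3 : ℝ[X]) * ((-1)^s * phiP s)) =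
      C ((-1:ℝ)^s) * ((20*X^2+20*X+3) * phiP s) := by
    rw [← neg_one_pow_C]; ring
  rw [h1, antideriv_C_mul]
  rw [show ((-1:ℝ[X])^s * phiP s) = C ((-1:ℝ)^s) * phiP s from by rw [neg_one_pow_C]]
  rw [derivative_C_mul, ← neg_one_pow_C]
  ring

lemma key (s : ℕ) : NonnegP (Psi s) ∧ (Psi s).natDegree ≤ 3*s ∧
    0 < (Psi s).coeff (3*s) ∧ X^s ∣ Psi s := by
  induction s with
  | zero =>
    have h0 : Psi 0 = 1 := by simp [Psi, phiP]
    refine ⟨fun k => ?_, by rw [h0]; simp, by rw [h0]; simp, by rw [h0]; simp⟩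
    rw [h0, coeff_one]; split <;> norm_num
  | succ s ih =>
    obtain ⟨h1, h2, h3, h4⟩ := ih
    set B : ℝ[X] := 4*X^2*(X+1)^2 with hB
    set q : ℝ[X] := 20*X^2+20*X+3 with hq
    set T1 : ℝ[X] := B * (Psi s).derivative with hT1
    set T2 : ℝ[X] := C (1/4) * polyAntideriv (q * Psi s) with hT2
    have hrec : Psi (s+1) = T1 + T2 := psi_rec s
    have hn1 : NonnegP T1 := nonnegP_B.mul h1.deriv
    have hn2 : NonnegP T2 :=
      (nonnegP_C (by norm_num)).mul ((nonnegP_q.mul h1).antideriv)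
    -- degree bounds
    have hdB : B.natDegree ≤ 4 := by rw [hB]; compute_degree
    have hdq : q.natDegree ≤ 2 := by rw [hq]; compute_degree
    have hd1 : T1.natDegree ≤ 3*(s+1) := by
      rcases Nat.eq_zero_or_pos s with rfl | hs
      · have : (Psi 0).derivative = 0 := by simp [Psi, phiP]
        rw [hT1, this, mul_zero]; simp
      · refine (natDegree_mul_le).trans ?_
        have := (natDegree_derivative_le (Psi s)).trans (Nat.sub_le_sub_right h2 1)
        omega
    have hd2 : T2.natDegree ≤ 3*(s+1) := by
      refine (natDegree_C_mul_le _ _).trans ?_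
      refine (antideriv_natDegree_le _).trans ?_
      have := (natDegree_mul_le (p := q) (q := Psi s))
      omega
    -- positivity of top coefficient
    have hqc : (q * Psi s).coeff (3*s+2) =
        20 * (Psi s).coeff (3*s) + 20 * (Psi s).coeff (3*s+1) + 3 * (Psi s).coeff (3*s+2) := by
      have hsplit : q * Psi s = C 20 * (X^2 * Psi s) + C 20 * (X * Psi s) + C 3 * Psi s := by
        rw [hq, map_ofNat C 20, map_ofNat C 3]; ring
      rw [hsplit, coeff_add, coeff_add, coeff_C_mul, coeff_C_mul, coeff_C_mul]
      rw [show (3*s+2) = 3*s + 2 from rfl, coeff_X_pow_mul (Psi s) 2 (3*s)]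
      rw [show (3*s+2) = (3*s+1) + 1 from rfl, coeff_X_mul]
    have hqpos : 0 < (q * Psi s).coeff (3*s+2) := by
      rw [hqc]
      have := h1 (3*s+1); have := h1 (3*s+2)
      nlinarith [h3]
    have h3' : 0 < (Psi (s+1)).coeff (3*(s+1)) := by
      rw [hrec, coeff_add]
      have hT2c : T2.coeff (3*(s+1)) = (1/4) * ((q * Psi s).coeff (3*s+2) / (3*s+2+1)) := by
        rw [hT2, coeff_C_mul, show 3*(s+1) = (3*s+2)+1 by ring, antideriv_coeff_succ]
        push_cast; ring_nf
      have : 0 < T2.coeff (3*(s+1)) := by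
        rw [hT2c]; positivity
      have := hn1 (3*(s+1))
      linarith
    -- divisibility
    have hdvd1 : X^(s+1) ∣ T1 := by
      rcases Nat.eq_zero_or_pos s with rfl | hs
      · have : (Psi 0).derivative = 0 := by simp [Psi, phiP]
        rw [hT1, this, mul_zero]; exact dvd_zero _
      · have hD : X^(s-1) ∣ (Psi s).derivative := by
          rw [X_pow_dvd_iff] at h4 ⊢
          intro m hm
          rw [coeff_derivative, h4 (m+1) (by omega), zero_mul]
        obtain ⟨g, hg⟩ := hD
        have hx : (X:ℝ[X])^(s+1) = X^2 * X^(s-1) := by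
          rw [← pow_add]; congr 1; omega
        exact ⟨4*(X+1)^2*g, by rw [hT1, hB, hg, hx]; ring⟩
    have hdvd2 : X^(s+1) ∣ T2 := by
      have : X^s ∣ q * Psi s := Dvd.dvd.mul_left h4 q
      exact Dvd.dvd.mul_left (antideriv_dvd this) _
    refine ⟨?_, ?_, h3', ?_⟩
    · rw [hrec]; exact hn1.add hn2
    · rw [hrec]; exact (natDegree_add_le _ _).trans (by omega)
    · rw [hrec]; exact dvd_add hdvd1 hdvd2

theorem stmt_8 (s : ℕ) (hs : 1 ≤ s) :
    (phiP s).natDegree = 3 * s ∧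
    Polynomial.X ^ s ∣ phiP s ∧
    ∀ k : ℕ, 0 ≤ (-1 : ℝ) ^ s * (phiP s).coeff k := by
  obtain ⟨h1, h2, h3, h4⟩ := key s
  have hcoeff : ∀ k, (Psi s).coeff k = (-1:ℝ)^s * (phiP s).coeff k := by
    intro k
    rw [Psi, neg_one_pow_C, coeff_C_mul]
  have hcoeff' : ∀ k, (phiP s).coeff k = (-1:ℝ)^s * (Psi s).coeff k := by
    intro k
    rw [hcoeff k, ← mul_assoc, ← pow_add]
    simp [pow_add, ← two_mul, pow_mul]
  refine ⟨?_, ?_, fun k => by rw [← hcoeff k]; exact h1 k⟩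
  · apply le_antisymm
    · rw [Polynomial.natDegree_le_iff_coeff_eq_zero]
      intro m hm
      rw [hcoeff', Polynomial.coeff_eq_zero_of_natDegree_lt (by omega), mul_zero]
    · exact le_natDegree_of_ne_zero (by rw [hcoeff']; positivity)
  · rw [X_pow_dvd_iff] at h4 ⊢
    intro m hm
    rw [hcoeff', h4 m hm, mul_zero]
end

section
/- Define polynomials φ_s by φ₀(τ) = 1 and φ_{s+1}(τ) = −4τ²(τ+1)²·φ_s′(τ) − (1/4)∫₀^τ (20u² + 20u + 3)·φ_s(u) du. Then for every n ≥ 1 and every real τ ≥ 0: ∫₀^τ |φ_n′(σ)| dσ = (−1)ⁿ·φ_n(τ) = |φ_n(τ)|. -/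
open Polynomial intervalIntegral

lemma polyAntideriv_coeff_zero (p : Polynomial ℝ) : (polyAntideriv p).coeff 0 = 0 := by
  rw [polyAntideriv, Polynomial.sum_def, Polynomial.finset_sum_coeff]
  simp

lemma polyAntideriv_coeff_succ (p : Polynomial ℝ) (k : ℕ) :
    (polyAntideriv p).coeff (k+1) = p.coeff k / (k+1 : ℝ) := by
  rw [polyAntideriv, Polynomial.sum_def, Polynomial.finset_sum_coeff]
  simp only [Polynomial.coeff_C_mul, Polynomial.coeff_X_pow]
  rw [Finset.sum_eq_single k]
  · simp
  · intro b _ hb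
    have hne : k ≠ b := fun h => hb h.symm
    simp [hne]
  · intro hk
    simp [Polynomial.notMem_support_iff.mp hk]

lemma polyAntideriv_C_mul (c : ℝ) (p : Polynomial ℝ) :
    polyAntideriv (Polynomial.C c * p) = Polynomial.C c * polyAntideriv p := by
  ext k
  cases k with
  | zero => simp [polyAntideriv_coeff_zero]
  | succ k =>
      simp [polyAntideriv_coeff_succ, Polynomial.coeff_C_mul, mul_div_assoc]

def NN (p : Polynomial ℝ) : Prop := ∀ i, 0 ≤ p.coeff i

lemma NN_add {p q : Polynomial ℝ} (hp : NN p) (hq : NN q) : NN (p + q) := by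
  intro i; simp only [Polynomial.coeff_add]; exact add_nonneg (hp i) (hq i)

lemma NN_mul {p q : Polynomial ℝ} (hp : NN p) (hq : NN q) : NN (p * q) := by
  intro i
  rw [Polynomial.coeff_mul]
  exact Finset.sum_nonneg fun x _ => mul_nonneg (hp x.1) (hq x.2)

lemma NN_deriv {p : Polynomial ℝ} (hp : NN p) : NN p.derivative := by
  intro i
  rw [Polynomial.coeff_derivative]
  exact mul_nonneg (hp _) (by positivity)

lemma NN_antideriv {p : Polynomial ℝ} (hp : NN p) : NN (polyAntideriv p) := by
  intro i
  cases i with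
  | zero => simp [polyAntideriv_coeff_zero]
  | succ k => rw [polyAntideriv_coeff_succ]; exact div_nonneg (hp _) (by positivity)

lemma NN_C {c : ℝ} (hc : 0 ≤ c) : NN (Polynomial.C c) := by
  intro i; rw [Polynomial.coeff_C]; split <;> simp [hc]

lemma NN_X : NN (Polynomial.X : Polynomial ℝ) := by
  intro i; rw [Polynomial.coeff_X]; split <;> simp

lemma NN_pow {p : Polynomial ℝ} (hp : NN p) (n : ℕ) : NN (p ^ n) := by
  induction n with
  | zero => simpa using NN_C (le_of_lt one_pos)
  | succ n ih => rw [pow_succ]; exact NN_mul ih hp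

lemma NN_ofNat (m : ℕ) [m.AtLeastTwo] : NN (OfNat.ofNat m : Polynomial ℝ) := by
  have : (OfNat.ofNat m : Polynomial ℝ) = Polynomial.C (m : ℝ) := by
    simp
    exact (Nat.cast_ofNat).symm
  rw [this]
  exact NN_C (by positivity)

lemma NN_eval {p : Polynomial ℝ} (hp : NN p) {x : ℝ} (hx : 0 ≤ x) : 0 ≤ p.eval x := by
  rw [Polynomial.eval_eq_sum_range]
  exact Finset.sum_nonneg fun i _ => mul_nonneg (hp i) (by positivity)

lemma NN_phi (s : ℕ) : NN (Polynomial.C ((-1:ℝ)^s) * phiP s) := by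
  induction s with
  | zero => simpa [phiP] using NN_C (le_of_lt one_pos)
  | succ s ih =>
    have key : Polynomial.C ((-1:ℝ)^(s+1)) * phiP (s+1) =
        4 * Polynomial.X ^ 2 * (Polynomial.X + 1) ^ 2 *
          (Polynomial.C ((-1:ℝ)^s) * phiP s).derivative +
        Polynomial.C (1/4) *
          polyAntideriv ((20 * Polynomial.X ^ 2 + 20 * Polynomial.X + 3) *
            (Polynomial.C ((-1:ℝ)^s) * phiP s)) := by
      rw [show ((20 : Polynomial ℝ) * Polynomial.X ^ 2 + 20 * Polynomial.X + 3) *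
            (Polynomial.C ((-1:ℝ)^s) * phiP s)
          = Polynomial.C ((-1:ℝ)^s) *
            ((20 * Polynomial.X ^ 2 + 20 * Polynomial.X + 3) * phiP s) by ring]
      rw [polyAntideriv_C_mul, Polynomial.derivative_C_mul, phiP,
        show ((-1:ℝ)^(s+1)) = -((-1:ℝ)^s) by ring, map_neg]
      ring
    rw [key]
    refine NN_add (NN_mul ?_ (NN_deriv ih)) (NN_mul (NN_C (by norm_num)) (NN_antideriv (NN_mul ?_ ih)))
    · exact NN_mul (NN_mul (NN_ofNat 4) (NN_pow NN_X 2))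
        (NN_pow (NN_add NN_X (NN_C (le_of_lt one_pos))) 2)
    · exact NN_add (NN_add (NN_mul (NN_ofNat 20) (NN_pow NN_X 2))
        (NN_mul (NN_ofNat 20) NN_X)) (NN_ofNat 3)

lemma phi_eval_zero (s : ℕ) : (phiP (s+1)).eval 0 = 0 := by
  have hA : (polyAntideriv ((20 * Polynomial.X ^ 2 + 20 * Polynomial.X + 3) * phiP s)).eval 0
      = 0 := by
    rw [← Polynomial.coeff_zero_eq_eval_zero, polyAntideriv_coeff_zero]
  rw [phiP]
  simp [hA]

theorem stmt_11 (n : ℕ) (hn : 1 ≤ n) (τ : ℝ) (hτ : 0 ≤ τ) :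
    (∫ σ in (0 : ℝ)..τ, |((phiP n).derivative).eval σ|) = (-1 : ℝ) ^ n * (phiP n).eval τ ∧
    (-1 : ℝ) ^ n * (phiP n).eval τ = |(phiP n).eval τ| := by
  obtain ⟨s, rfl⟩ : ∃ s, n = s + 1 := ⟨n - 1, (Nat.succ_pred_eq_of_pos hn).symm⟩
  set c : ℝ := (-1:ℝ)^(s+1) with hc
  have hcabs : |c| = 1 := by rw [hc, abs_pow]; simp
  have hNN := NN_phi (s+1)
  have hd : NN (Polynomial.C c * (phiP (s+1)).derivative) := by
    rw [← Polynomial.derivative_C_mul]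
    exact NN_deriv hNN
  have h2 : 0 ≤ c * (phiP (s+1)).eval τ := by
    simpa using NN_eval hNN hτ
  constructor
  · have hcong : (∫ σ in (0:ℝ)..τ, |((phiP (s+1)).derivative).eval σ|)
        = ∫ σ in (0:ℝ)..τ, c * ((phiP (s+1)).derivative).eval σ := by
      apply intervalIntegral.integral_congr
      intro σ hσ
      have hσ0 : 0 ≤ σ := by
        rw [Set.uIcc_of_le hτ] at hσ
        exact hσ.1
      have h := NN_eval hd hσ0
      simp only [Polynomial.eval_mul, Polynomial.eval_C] at h
      dsimp only
      rw [show |((phiP (s+1)).derivative).eval σ| = |c * ((phiP (s+1)).derivative).eval σ| by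
        rw [abs_mul, hcabs, one_mul]]
      exact abs_of_nonneg h
    rw [hcong, intervalIntegral.integral_const_mul]
    have hFTC : (∫ σ in (0:ℝ)..τ, ((phiP (s+1)).derivative).eval σ)
        = (phiP (s+1)).eval τ - (phiP (s+1)).eval 0 := by
      apply intervalIntegral.integral_eq_sub_of_hasDerivAt
      · intro x _
        exact (phiP (s+1)).hasDerivAt x
      · exact ((phiP (s+1)).derivative.continuous).intervalIntegrable (μ := MeasureTheory.volume) _ _
    rw [hFTC, phi_eval_zero, sub_zero]
  · rw [show |(phiP (s+1)).eval τ| = |c * (phiP (s+1)).eval τ| by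
      rw [abs_mul, hcabs, one_mul]]
    exact (abs_of_nonneg h2).symm
end

section
/- Let a > 0, z > 0, and λ = a/z². Let f : [0, ∞) → ℝ be continuous, and suppose the function g(s) = √s·(f(s) − f(λ))/(s − λ) (defined at s = λ by continuous extension) is continuously differentiable on (0, ∞), and set f₁(s) = √s·g′(s). Assume that s ↦ s^{a−1/2} e^{−z²s} f(s) and s ↦ s^{a−1/2} e^{−z²s} f₁(s) are integrable on (0, ∞), and that s^{a} e^{−z²s} g(s) → 0 as s → 0⁺ and as s → ∞. Then ∫₀^∞ s^{a−1/2} e^{−z²s} f(s) ds = Γ(a + 1/2)·z^{−2a−1}·f(λ) + z^{−2}·∫₀^∞ s^{a−1/2} e^{−z²s} f₁(s) ds. -/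
/-! With `b = z²` and `a = λ b`, the key identity
`d/ds (s^a e^{-bs}) = -b s^{a-1} (s - λ) e^{-bs}` and `(s - λ) g(s) = √s (f(s) - f(λ))` show
that `s^a e^{-bs} g(s)` has derivative `s^{a-1/2} e^{-bs} (f₁(s) - b (f(s) - f(λ)))`.
By the boundary limits its integral over `(0, ∞)` vanishes, and the `f(λ)` term integrates
to `Γ(a + 1/2) b^{-a-1/2} f(λ)`. -/

open Real Set MeasureTheory Filter Topology

theorem integral_Ioi_of_hasDerivAt_of_tendsto_nhdsGT {E : Type*} [NormedAddCommGroup E]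
    [NormedSpace ℝ E] [CompleteSpace E] {f f' : ℝ → E} {a : ℝ} {m₀ m : E}
    (hderiv : ∀ x ∈ Ioi a, HasDerivAt f (f' x) x) (f'int : IntegrableOn f' (Ioi a))
    (hbot : Tendsto f (𝓝[>] a) (𝓝 m₀)) (htop : Tendsto f atTop (𝓝 m)) :
    ∫ x in Ioi a, f' x = m - m₀ := by
  classical
  have hupdate : ∀ x, a < x → Function.update f a m₀ x = f x := fun x hx =>
    Function.update_of_ne hx.ne' _ _
  simpa using integral_Ioi_of_hasDerivAt_of_tendsto
    (continuousWithinAt_update_same.2 (by rwa [Ici_sdiff_left]))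
    (fun x hx => (hderiv x hx).congr_of_eventuallyEq
      ((lt_mem_nhds hx).mono fun y hy => hupdate y hy)) f'int
    (htop.congr' ((eventually_gt_atTop a).mono fun x hx => (hupdate x hx).symm))

theorem hasDerivAt_rpow_mul_exp_neg_mul {a b s : ℝ} (hs : s ≠ 0) :
    HasDerivAt (fun t => t ^ a * exp (-b * t)) ((a - b * s) * s ^ (a - 1) * exp (-b * s)) s := by
  have hexp : HasDerivAt (fun t => exp (-b * t)) (exp (-b * s) * -b) s :=
    ((hasDerivAt_id s).const_mul (-b)).exp.congr_deriv (by simp)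
  refine ((hasDerivAt_rpow_const (p := a) (Or.inl hs)).mul hexp).congr_deriv ?_
  rw [show s ^ a = s ^ (a - 1) * s by rw [← rpow_add_one hs]; ring_nf]
  ring

theorem hasDerivAt_rpow_mul_exp_neg_mul_mul {a b lam s g' : ℝ} {f g : ℝ → ℝ} (hs : 0 < s)
    (ha : a = lam * b) (hgs : (s - lam) * g s = √s * (f s - f lam)) (hg : HasDerivAt g g' s) :
    HasDerivAt (fun t => t ^ a * exp (-b * t) * g t)
      (s ^ (a - 1 / 2) * exp (-b * s) * (√s * g' - b * (f s - f lam))) s := by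
  refine ((hasDerivAt_rpow_mul_exp_neg_mul (a := a) (b := b) hs.ne').mul hg).congr_deriv ?_
  have hsqrt : s ^ (a - 1 / 2) * √s = s ^ a := by
    rw [sqrt_eq_rpow, ← rpow_add hs]; ring_nf
  have hsqrt' : s ^ (a - 1) * √s = s ^ (a - 1 / 2) := by
    rw [sqrt_eq_rpow, ← rpow_add hs]; ring_nf
  rw [← hsqrt]
  linear_combination (-b * s ^ (a - 1) * exp (-b * s)) * hgs
    - (b * exp (-b * s) * (f s - f lam)) * hsqrt' + (s ^ (a - 1) * exp (-b * s) * g s) * ha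

theorem integral_rpow_sub_one_mul_exp_neg_mul_Ioi {p b : ℝ} (hp : 0 < p) (hb : 0 < b) :
    ∫ t in Ioi 0, t ^ (p - 1) * exp (-b * t) = Gamma p * b ^ (-p) := by
  simp_rw [neg_mul, integral_rpow_mul_exp_neg_mul_Ioi hp hb, one_div, inv_rpow hb.le,
    rpow_neg hb.le, mul_comm]

theorem integral_rpow_mul_exp_neg_mul_eq_gamma_mul_add {a b lam : ℝ} {f g g' f₁ : ℝ → ℝ}
    (ha : -(1 / 2) < a) (hb : 0 < b) (hlam : a = lam * b)
    (hgs : ∀ s ∈ Ioi (0 : ℝ), (s - lam) * g s = √s * (f s - f lam))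
    (hg : ∀ s ∈ Ioi (0 : ℝ), HasDerivAt g (g' s) s)
    (hf₁ : ∀ s ∈ Ioi (0 : ℝ), f₁ s = √s * g' s)
    (hint : IntegrableOn (fun s => s ^ (a - 1 / 2) * exp (-b * s) * f s) (Ioi 0))
    (hint₁ : IntegrableOn (fun s => s ^ (a - 1 / 2) * exp (-b * s) * f₁ s) (Ioi 0))
    (hlim0 : Tendsto (fun s => s ^ a * exp (-b * s) * g s) (𝓝[>] 0) (𝓝 0))
    (hlimTop : Tendsto (fun s => s ^ a * exp (-b * s) * g s) atTop (𝓝 0)) :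
    ∫ s in Ioi 0, s ^ (a - 1 / 2) * exp (-b * s) * f s =
      Gamma (a + 1 / 2) * b ^ (-(a + 1 / 2)) * f lam +
        b⁻¹ * ∫ s in Ioi 0, s ^ (a - 1 / 2) * exp (-b * s) * f₁ s := by
  have hw : IntegrableOn (fun s : ℝ => s ^ (a - 1 / 2) * exp (-b * s)) (Ioi 0) := by
    simpa using integrableOn_rpow_mul_exp_neg_mul_rpow (s := a - 1 / 2) (p := 1)
      (by linarith) one_pos hb
  have hgamma : ∫ s in Ioi 0, s ^ (a - 1 / 2) * exp (-b * s)
      = Gamma (a + 1 / 2) * b ^ (-(a + 1 / 2)) := by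
    convert integral_rpow_sub_one_mul_exp_neg_mul_Ioi (p := a + 1 / 2) (by linarith) hb using 5
    ring
  have hderiv : ∀ s ∈ Ioi (0 : ℝ), HasDerivAt (fun t => t ^ a * exp (-b * t) * g t)
      (s ^ (a - 1 / 2) * exp (-b * s) * f₁ s - b * (s ^ (a - 1 / 2) * exp (-b * s) * f s)
        + b * f lam * (s ^ (a - 1 / 2) * exp (-b * s))) s := fun s hs =>
    (hasDerivAt_rpow_mul_exp_neg_mul_mul hs hlam (hgs s hs) (hg s hs)).congr_deriv
      (by rw [hf₁ s hs]; ring)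
  have hzero := integral_Ioi_of_hasDerivAt_of_tendsto_nhdsGT hderiv
    ((hint₁.sub (hint.const_mul _)).add (hw.const_mul _)) hlim0 hlimTop
  rw [integral_add ?_ (hw.const_mul _), integral_sub hint₁ (hint.const_mul _),
    integral_const_mul, integral_const_mul, sub_zero, hgamma] at hzero
  · rw [← sub_eq_iff_eq_add', eq_inv_mul_iff_mul_eq₀ hb.ne']
    linear_combination -hzero
  · exact hint₁.sub (hint.const_mul _)

theorem stmt_14_general (a z lam : ℝ) (ha : 0 < a) (hz : 0 < z) (hlam : lam = a / z ^ 2)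
    (f g g' : ℝ → ℝ)
    (hg_eq : ∀ s ∈ Set.Ioi (0 : ℝ), s ≠ lam →
      g s = Real.sqrt s * (f s - f lam) / (s - lam))
    (hg_deriv : ∀ s ∈ Set.Ioi (0 : ℝ), HasDerivAt g (g' s) s)
    (f₁ : ℝ → ℝ) (hf₁ : ∀ s : ℝ, f₁ s = Real.sqrt s * g' s)
    (hint : IntegrableOn (fun s : ℝ => s ^ (a - 1 / 2) * Real.exp (-z ^ 2 * s) * f s)
      (Set.Ioi 0))
    (hint₁ : IntegrableOn (fun s : ℝ => s ^ (a - 1 / 2) * Real.exp (-z ^ 2 * s) * f₁ s)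
      (Set.Ioi 0))
    (hlim0 : Tendsto (fun s : ℝ => s ^ a * Real.exp (-z ^ 2 * s) * g s)
      (nhdsWithin 0 (Set.Ioi 0)) (nhds 0))
    (hlimTop : Tendsto (fun s : ℝ => s ^ a * Real.exp (-z ^ 2 * s) * g s) atTop (nhds 0)) :
    ∫ s in Set.Ioi (0 : ℝ), s ^ (a - 1 / 2) * Real.exp (-z ^ 2 * s) * f s =
      Real.Gamma (a + 1 / 2) * z ^ (-2 * a - 1) * f lam +
        z ^ (-2 : ℝ) * ∫ s in Set.Ioi (0 : ℝ), s ^ (a - 1 / 2) * Real.exp (-z ^ 2 * s) * f₁ s := by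
  have hz2 : 0 < z ^ 2 := by positivity
  have hgs : ∀ s ∈ Ioi (0 : ℝ), (s - lam) * g s = √s * (f s - f lam) := fun s hs => by
    rcases eq_or_ne s lam with rfl | hne
    · simp
    · rw [hg_eq s hs hne]; field_simp [sub_ne_zero.2 hne]
  have hpow : (z ^ 2) ^ (-(a + 1 / 2)) = z ^ (-2 * a - 1) := by
    rw [← rpow_natCast, ← rpow_mul hz.le]; ring_nf
  rw [integral_rpow_mul_exp_neg_mul_eq_gamma_mul_add (by linarith) hz2
      (by rw [hlam]; field_simp) hgs hg_deriv (fun s _ => hf₁ s) hint hint₁ hlim0 hlimTop,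
    hpow, rpow_neg hz.le, rpow_two]

theorem stmt_14 (a z lam : ℝ) (ha : 0 < a) (hz : 0 < z) (hlam : lam = a / z ^ 2)
    (f g g' : ℝ → ℝ)
    (hf : ContinuousOn f (Set.Ici 0))
    (hg_eq : ∀ s ∈ Set.Ioi (0 : ℝ), s ≠ lam →
      g s = Real.sqrt s * (f s - f lam) / (s - lam))
    (hg_cont : ContinuousOn g (Set.Ioi 0))
    (hg_deriv : ∀ s ∈ Set.Ioi (0 : ℝ), HasDerivAt g (g' s) s)
    (hg'_cont : ContinuousOn g' (Set.Ioi 0))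
    (f₁ : ℝ → ℝ) (hf₁ : ∀ s : ℝ, f₁ s = Real.sqrt s * g' s)
    (hint : IntegrableOn (fun s : ℝ => s ^ (a - 1 / 2) * Real.exp (-z ^ 2 * s) * f s)
      (Set.Ioi 0))
    (hint₁ : IntegrableOn (fun s : ℝ => s ^ (a - 1 / 2) * Real.exp (-z ^ 2 * s) * f₁ s)
      (Set.Ioi 0))
    (hlim0 : Tendsto (fun s : ℝ => s ^ a * Real.exp (-z ^ 2 * s) * g s)
      (nhdsWithin 0 (Set.Ioi 0)) (nhds 0))
    (hlimTop : Tendsto (fun s : ℝ => s ^ a * Real.exp (-z ^ 2 * s) * g s) atTop (nhds 0)) :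
    ∫ s in Set.Ioi (0 : ℝ), s ^ (a - 1 / 2) * Real.exp (-z ^ 2 * s) * f s =
      Real.Gamma (a + 1 / 2) * z ^ (-2 * a - 1) * f lam +
        z ^ (-2 : ℝ) * ∫ s in Set.Ioi (0 : ℝ), s ^ (a - 1 / 2) * Real.exp (-z ^ 2 * s) * f₁ s :=
  stmt_14_general a z lam ha hz hlam f g g' hg_eq hg_deriv f₁ hf₁ hint hint₁ hlim0 hlimTop
end

section
/- Let a > 0, z > 0, σ ≥ 0, λ = a/z², and assume z² > σ and a + 1/2 > λσ. Let g : (0, ∞) → ℝ be measurable with |g(s)| ≤ C·[ (s/λ)^{−λ} e^{s−λ} ]^{σ} for all s > 0, where C ≥ 0. Then | (z^{2a+1}/Γ(a + 1/2))·∫₀^∞ s^{a−1/2} e^{−z²s} g(s) ds | ≤ C · a^{λσ} e^{−λσ} (1 − σ/z²)^{λσ − a − 1/2} · Γ(a + 1/2 − λσ)/Γ(a + 1/2). -/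
/-!
Raising the weight to the power `σ` splits it as `λ^{λσ} e^{-λσ} · s^{-λσ} e^{σ s}`, so the
integrand is dominated by `C λ^{λσ} e^{-λσ} · s^{p-1} e^{-(z²-σ)s}` with `p = a + 1/2 - λσ > 0`.
The Gamma integral `∫₀^∞ s^{p-1} e^{-bs} ds = b^{-p} Γ(p)` with `b = z² - σ > 0` evaluates the
majorant, and `z^{2a+1} λ^{λσ} (z² - σ)^{-p} = a^{λσ} (1 - σ/z²)^{-p}` since `z² λ = a`.
-/

open Real Set MeasureTheory

lemma weight_rpow_eq {s lam σ : ℝ} (hs : 0 ≤ s) (hlam : 0 ≤ lam) :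
    ((s / lam) ^ (-lam) * exp (s - lam)) ^ σ =
      lam ^ (lam * σ) * exp (-(lam * σ)) * (s ^ (-(lam * σ)) * exp (σ * s)) := by
  rw [mul_rpow (rpow_nonneg (div_nonneg hs hlam) _) (exp_pos _).le,
    ← rpow_mul (div_nonneg hs hlam), neg_mul, div_rpow hs hlam, rpow_neg hlam,
    div_eq_mul_inv, inv_inv, ← exp_mul, sub_mul, sub_eq_add_neg, exp_add]
  ring_nf

lemma abs_setIntegral_Ioi_le_Gamma {f : ℝ → ℝ} {K p b : ℝ} (hp : 0 < p) (hb : 0 < b)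
    (hf : ∀ s ∈ Ioi (0 : ℝ), |f s| ≤ K * (s ^ (p - 1) * exp (-(b * s)))) :
    |∫ s in Ioi (0 : ℝ), f s| ≤ K * ((1 / b) ^ p * Gamma p) := by
  have hGamma := integral_rpow_mul_exp_neg_mul_Ioi hp hb
  have hint : IntegrableOn (fun s : ℝ ↦ s ^ (p - 1) * exp (-(b * s))) (Ioi 0) :=
    .of_integral_ne_zero <| by
      rw [hGamma]; exact (mul_pos (by positivity) (Gamma_pos_of_pos hp)).ne'
  calc |∫ s in Ioi (0 : ℝ), f s|
      ≤ ∫ s in Ioi (0 : ℝ), |f s| := abs_integral_le_integral_abs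
    _ ≤ ∫ s in Ioi (0 : ℝ), K * (s ^ (p - 1) * exp (-(b * s))) :=
        integral_mono_of_nonneg (.of_forall fun _ ↦ abs_nonneg _) (hint.const_mul K)
          ((ae_restrict_iff' measurableSet_Ioi).2 (.of_forall hf))
    _ = K * ((1 / b) ^ p * Gamma p) := by rw [integral_const_mul, hGamma]

lemma abs_rpow_mul_exp_mul_le_of_abs_le_weight {g : ℝ → ℝ} {s q c lam σ C : ℝ} (hs : 0 < s)
    (hlam : 0 ≤ lam) (hg : |g s| ≤ C * ((s / lam) ^ (-lam) * exp (s - lam)) ^ σ) :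
    |s ^ q * exp (-c * s) * g s| ≤
      C * lam ^ (lam * σ) * exp (-(lam * σ)) * (s ^ (q - lam * σ) * exp (-((c - σ) * s))) := by
  have hsplit : s ^ q * exp (-c * s) * (C * ((s / lam) ^ (-lam) * exp (s - lam)) ^ σ) =
      C * lam ^ (lam * σ) * exp (-(lam * σ)) * (s ^ (q - lam * σ) * exp (-((c - σ) * s))) := by
    rw [weight_rpow_eq hs.le hlam, sub_eq_add_neg q, rpow_add hs,
      show -((c - σ) * s) = -c * s + σ * s by ring, exp_add]
    ring
  rw [abs_mul, abs_of_nonneg (by positivity : 0 ≤ s ^ q * exp (-c * s)), ← hsplit]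
  gcongr

lemma rpow_mul_rpow_mul_one_div_sub_rpow {t lam σ r e : ℝ} (ht : 0 < t) (hlam : 0 ≤ lam)
    (hσt : σ < t) :
    t ^ r * lam ^ e * (1 / (t - σ)) ^ (r - e) = (t * lam) ^ e * (1 - σ / t) ^ (e - r) := by
  have hfactor : t - σ = t * (1 - σ / t) := by field_simp
  have hrest : 0 < 1 - σ / t := by rw [sub_pos, div_lt_one ht]; exact hσt
  have hexp : t ^ r * t ^ (e - r) = t ^ e := by rw [← rpow_add ht]; ring_nf
  rw [one_div, inv_rpow (by linarith), ← rpow_neg (by linarith), neg_sub, hfactor,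
    mul_rpow ht.le hrest.le, mul_rpow ht.le hlam]
  linear_combination (lam ^ e * (1 - σ / t) ^ (e - r)) * hexp

theorem stmt_16_general (a z σ lam C : ℝ) (ha : 0 < a) (hz : 0 < z)
    (hlam : lam = a / z ^ 2) (hzσ : σ < z ^ 2) (haσ : lam * σ < a + 1 / 2)
    (g : ℝ → ℝ)
    (hg_bound : ∀ s : ℝ, 0 < s →
      |g s| ≤ C * ((s / lam) ^ (-lam) * Real.exp (s - lam)) ^ σ) :
    |(z ^ (2 * a + 1) / Real.Gamma (a + 1 / 2)) *
        ∫ s in Set.Ioi (0 : ℝ), s ^ (a - 1 / 2) * Real.exp (-z ^ 2 * s) * g s| ≤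
      C * a ^ (lam * σ) * Real.exp (-(lam * σ)) * (1 - σ / z ^ 2) ^ (lam * σ - a - 1 / 2) *
        (Real.Gamma (a + 1 / 2 - lam * σ) / Real.Gamma (a + 1 / 2)) := by
  have hz2 : 0 < z ^ 2 := by positivity
  have hlam0 : 0 ≤ lam := by rw [hlam]; positivity
  have hprefactor : 0 ≤ z ^ (2 * a + 1) / Gamma (a + 1 / 2) :=
    div_nonneg (rpow_nonneg hz.le _) (Gamma_pos_of_pos (by linarith)).le
  have hintegral := abs_setIntegral_Ioi_le_Gamma (K := C * lam ^ (lam * σ) * exp (-(lam * σ)))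
    (p := a + 1 / 2 - lam * σ) (b := z ^ 2 - σ)
    (by linarith) (by linarith) fun s (hs : 0 < s) ↦
      (abs_rpow_mul_exp_mul_le_of_abs_le_weight (q := a - 1 / 2) (c := z ^ 2) hs hlam0
        (hg_bound s hs)).trans_eq (by ring_nf)
  have hpow : z ^ (2 * a + 1) = (z ^ 2) ^ (a + 1 / 2) := by
    rw [← rpow_natCast, ← rpow_mul hz.le]; norm_num; ring_nf
  have hscale : z ^ 2 * lam = a := by rw [hlam]; field_simp
  rw [abs_mul, abs_of_nonneg hprefactor]
  calc _ ≤ z ^ (2 * a + 1) / Gamma (a + 1 / 2) * (C * lam ^ (lam * σ) * exp (-(lam * σ)) *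
          ((1 / (z ^ 2 - σ)) ^ (a + 1 / 2 - lam * σ) * Gamma (a + 1 / 2 - lam * σ))) := by
        gcongr
    _ = C * exp (-(lam * σ)) * (Gamma (a + 1 / 2 - lam * σ) / Gamma (a + 1 / 2)) *
          ((z ^ 2) ^ (a + 1 / 2) * lam ^ (lam * σ) *
            (1 / (z ^ 2 - σ)) ^ (a + 1 / 2 - lam * σ)) := by
        rw [hpow]; ring
    _ = _ := by
        rw [rpow_mul_rpow_mul_one_div_sub_rpow hz2 hlam0 hzσ, hscale]
        ring_nf

theorem stmt_16 (a z σ lam C : ℝ) (ha : 0 < a) (hz : 0 < z) (hσ : 0 ≤ σ)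
    (hlam : lam = a / z ^ 2) (hzσ : σ < z ^ 2) (haσ : lam * σ < a + 1 / 2)
    (hC : 0 ≤ C) (g : ℝ → ℝ) (hg_meas : Measurable g)
    (hg_bound : ∀ s : ℝ, 0 < s →
      |g s| ≤ C * ((s / lam) ^ (-lam) * Real.exp (s - lam)) ^ σ) :
    |(z ^ (2 * a + 1) / Real.Gamma (a + 1 / 2)) *
        ∫ s in Set.Ioi (0 : ℝ), s ^ (a - 1 / 2) * Real.exp (-z ^ 2 * s) * g s| ≤
      C * a ^ (lam * σ) * Real.exp (-(lam * σ)) * (1 - σ / z ^ 2) ^ (lam * σ - a - 1 / 2) *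
        (Real.Gamma (a + 1 / 2 - lam * σ) / Real.Gamma (a + 1 / 2)) :=
  stmt_16_general a z σ lam C ha hz hlam hzσ haσ g hg_bound
end

section
/- Let σ₀ > 0, τ ∈ ℝ, and set σ = −σ₀ + iτ (a point of the vertical line Re σ = −σ₀ in ℂ). Then for all real s ≥ 0 and λ ≥ 0: | (σ + s) / ( 2(σ − λ)(σ − s)² ) | ≤ λ/(σ₀² + τ²)^{3/2} + 3/(2(σ₀² + τ²)). -/
/-!
With `p = σ - s` and `q = σ - λ`, the kernel splits as `λ / (p² q) - 1 / (2 p q) + 1 / p²`.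
On the half-plane `Re σ ≤ 0`, moving `σ` to the right by a nonnegative real only increases
its modulus, so `|p|, |q| ≥ |σ| = √(σ₀² + τ²)` and the three terms are bounded separately.
-/

open Complex Real

theorem Complex.norm_le_norm_sub_ofReal {z : ℂ} (hz : z.re ≤ 0) {t : ℝ} (ht : 0 ≤ t) :
    ‖z‖ ≤ ‖z - t‖ := by
  rw [← sq_le_sq₀ (norm_nonneg _) (norm_nonneg _), Complex.sq_norm, Complex.sq_norm,
    normSq_apply, normSq_apply]
  simp only [sub_re, sub_im, ofReal_re, ofReal_im, sub_zero]
  nlinarith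

theorem kernel_partial_fractions {K : Type*} [Field K] [NeZero (2 : K)] {σ s lam : K}
    (hp : σ - s ≠ 0) (hq : σ - lam ≠ 0) :
    (σ + s) / (2 * (σ - lam) * (σ - s) ^ 2) =
      lam / ((σ - s) ^ 2 * (σ - lam)) - 1 / (2 * (σ - s) * (σ - lam)) + 1 / (σ - s) ^ 2 := by
  field_simp
  ring

theorem norm_kernel_le {σ : ℂ} (hre : σ.re ≤ 0) (hσ : σ ≠ 0) {s lam : ℝ} (hs : 0 ≤ s)
    (hlam : 0 ≤ lam) :
    ‖(σ + s) / (2 * (σ - lam) * (σ - s) ^ 2)‖ ≤ lam / ‖σ‖ ^ 3 + 3 / (2 * ‖σ‖ ^ 2) := by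
  have hσpos : 0 < ‖σ‖ := norm_pos_iff.mpr hσ
  have hp : ‖σ‖ ≤ ‖σ - s‖ := norm_le_norm_sub_ofReal hre hs
  have hq : ‖σ‖ ≤ ‖σ - lam‖ := norm_le_norm_sub_ofReal hre hlam
  have hp0 : σ - s ≠ 0 := norm_pos_iff.mp (hσpos.trans_le hp)
  have hq0 : σ - lam ≠ 0 := norm_pos_iff.mp (hσpos.trans_le hq)
  rw [kernel_partial_fractions hp0 hq0]
  calc _ ≤ ‖(lam : ℂ) / ((σ - s) ^ 2 * (σ - lam))‖ + ‖1 / (2 * (σ - s) * (σ - lam))‖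
          + ‖1 / (σ - s) ^ 2‖ := (norm_add_le _ _).trans (by gcongr; exact norm_sub_le _ _)
    _ = lam / (‖σ - s‖ ^ 2 * ‖σ - lam‖) + 1 / (2 * ‖σ - s‖ * ‖σ - lam‖)
          + 1 / ‖σ - s‖ ^ 2 := by
        simp [norm_real, abs_of_nonneg hlam]
    _ ≤ lam / (‖σ‖ ^ 2 * ‖σ‖) + 1 / (2 * ‖σ‖ * ‖σ‖) + 1 / ‖σ‖ ^ 2 := by gcongr
    _ = lam / ‖σ‖ ^ 3 + 3 / (2 * ‖σ‖ ^ 2) := by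
        field_simp
        ring

theorem stmt_18 (σ₀ τ : ℝ) (hσ₀ : 0 < σ₀) (σ : ℂ) (hσ : σ = -(σ₀ : ℂ) + (τ : ℂ) * Complex.I)
    (s lam : ℝ) (hs : 0 ≤ s) (hlam : 0 ≤ lam) :
    ‖(σ + (s : ℂ)) / (2 * (σ - (lam : ℂ)) * (σ - (s : ℂ)) ^ 2)‖ ≤
      lam / (σ₀ ^ 2 + τ ^ 2) ^ ((3 : ℝ) / 2) + 3 / (2 * (σ₀ ^ 2 + τ ^ 2)) := by
  have hre : σ.re = -σ₀ := by simp [hσ]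
  have hσ0 : σ ≠ 0 := ne_of_apply_ne re (by rw [hre, zero_re]; exact neg_ne_zero.mpr hσ₀.ne')
  have hnorm : σ₀ ^ 2 + τ ^ 2 = ‖σ‖ ^ 2 := by
    rw [hσ, ← ofReal_neg, Complex.sq_norm, normSq_add_mul_I, neg_sq]
  have hpow : (‖σ‖ ^ 2) ^ ((3 : ℝ) / 2) = ‖σ‖ ^ 3 := by
    rw [← Real.rpow_natCast, ← Real.rpow_mul (norm_nonneg _)]
    norm_num
  rw [hnorm, hpow]
  exact norm_kernel_le (by linarith) hσ0 hs hlam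
end
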